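/- arXiv:1805.07972 — 2 statements merged into one kernel-verified Lean document; each statement's English description precedes it below -/
import Mathlib

section
/- In the asymptotic uplink setup, let D_{li} be the diagonal matrix carrying the diagonal entries of R_{li}, let Λ be the diagonal matrix whose diagonal entries are the reciprocals of the diagonal entries of Σ_{(l,i)∈P} p_{li}τ_p R_{li} + σ² I_M, and set Σ_{jk} = p_{jk}τ_p D_{jk} Λ Ψ^{-1} Λ D_{jk}. Define χ_{li} = tr(R_{li}Σ_{jk}) + h̄_{jk}^H R_{li} h̄_{jk} + h̄_{li}^H Σ_{jk} h̄_{li} + |h̄_{jk}^H h̄_{li}|² + [p_{jk}p_{li}τ_p² (tr(D_{li}ΛD_{jk}))² + 2√(p_{jk}p_{li})τ_p tr(D_{li}ΛD_{jk}) Re{h̄_{jk}^H h̄_{li}} if (l,i) ∈ P, and 0 otherwise], and γ^ew(M) = p_{jk}(p_{jk}τ_p tr(D_{jk}ΛD_{jk}) + ‖h̄_{jk}‖²)² / [Σ_{all users (l,i)} p_{li} χ_{li} − p_{jk}(p_{jk}τ_p tr(D_{jk}ΛD_{jk}) + ‖h̄_{jk}‖²)² + σ²(tr(Σ_{jk}) +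 ‖h̄_{jk}‖²)]. Then: (a) if (1/M) tr(D_{li}(M) D_{jk}(M)) → 0 as M → ∞ for every (l,i) ∈ P\{(j,k)}, then γ^ew(M) → +∞; (b) if instead there exist c > 0 and M₀ such that Σ_{(l,i)∈P\{(j,k)}} (1/M) tr(D_{li}(M) D_{jk}(M)) ≥ c for all M ≥ M₀, then γ^ew(M) − [p_{jk}² τ_p tr(D_{jk}ΛD_{jk}) + p_{jk}‖h̄_{jk}‖²] / [Σ_{(l,i)∈P\{(j,k)}} p_{li}² p_{jk} τ_p² (tr(D_{li}ΛD_{jk}))² / (p_{jk}τ_p tr(D_{jk}ΛD_{jk}) + ‖h̄_{jk}‖²)] → 0 as M → ∞. -/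
/-!
Put `t = p_{jk} τ_p tr(D_{jk} Λ D_{jk}) + ‖h̄_{jk}‖²`, so that `γ^{ew} = p_{jk} t² / Den`.
Since the diagonal of `Ψ⁻¹` lies between `σ²` and a constant, every `tr(D_u Λ D_v)` is comparable
to `tr(D_u D_v) = O(M)`, and (A1) makes `t` grow linearly in `M`. Expanding `χ_{jk}` gives
`Den = S + E` with the coherent pilot-contamination term
`S = Σ_{u ∈ P∖{jk}} p_u² p_{jk} τ_p² tr(D_u Λ D_{jk})²` and `E = o(M²)`, by (A1)–(A3).
In case (a) also `S = o(M²)`, so `Den = o(t²)` and `γ^{ew} → ∞`. In case (b) Cauchy–Schwarz gives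
`M² = O(S)`, so `Den ~ S`, and `γ^{ew} - p_{jk} t² / S → 0`; the subtracted term of the theorem is
`p_{jk} t² / S` rewritten.
-/

open Matrix Filter Topology Asymptotics
open scoped ComplexOrder

theorem inv_mul_mul_inv {G : Type*} [GroupWithZero G] (a : G) : a⁻¹ * a * a⁻¹ = a⁻¹ := by
  simpa using mul_inv_mul_cancel a⁻¹

namespace Finset

variable {κ : Type*} {s : Finset κ} {x y : κ → ℝ} {c : ℝ}

lemma inv_mul_sum_le_sum_div (hx : ∀ i ∈ s, 0 ≤ x i) (hy : ∀ i ∈ s, 0 < y i)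
    (hyc : ∀ i ∈ s, y i ≤ c) : c⁻¹ * ∑ i ∈ s, x i ≤ ∑ i ∈ s, x i / y i := by
  rw [mul_sum]
  exact sum_le_sum fun i hi => inv_mul_eq_div c (x i) ▸
    div_le_div_of_nonneg_left (hx i hi) (hy i hi) (hyc i hi)

lemma sum_div_le_inv_mul_sum (hx : ∀ i ∈ s, 0 ≤ x i) (hc : 0 < c) (hcy : ∀ i ∈ s, c ≤ y i) :
    ∑ i ∈ s, x i / y i ≤ c⁻¹ * ∑ i ∈ s, x i := by
  rw [mul_sum]
  exact sum_le_sum fun i hi => inv_mul_eq_div c (x i) ▸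
    div_le_div_of_nonneg_left (hx i hi) hc (hcy i hi)

end Finset

namespace Asymptotics

variable {α : Type*} {l : Filter α}

lemma IsBigO.of_nonneg_of_le {f g k : α → ℝ} (hf : ∀ x, 0 ≤ f x) (hfg : ∀ x, f x ≤ g x)
    (hg : g =O[l] k) : f =O[l] k :=
  (isBigO_of_le l fun x => by
    rw [Real.norm_of_nonneg (hf x), Real.norm_of_nonneg ((hf x).trans (hfg x))]
    exact hfg x).trans hg

lemma tendsto_const_mul_div_atTop_of_isLittleO {f g : α → ℝ} {c : ℝ} (hc : 0 < c)
    (hf : ∀ᶠ x in l, 0 < f x) (hg : ∀ᶠ x in l, 0 < g x) (h : f =o[l] g) :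
    Tendsto (fun x => c * g x / f x) l atTop := by
  have hfg : Tendsto (fun x => f x / g x) l (𝓝[>] 0) :=
    tendsto_nhdsWithin_iff.2 ⟨h.tendsto_div_nhds_zero, by
      filter_upwards [hf, hg] with x hfx hgx using div_pos hfx hgx⟩
  refine (hfg.inv_tendsto_nhdsGT_zero.const_mul_atTop hc).congr fun x => ?_
  simp [mul_div_assoc]

lemma tendsto_div_sub_div_of_isEquivalent {f g h : α → ℝ} (hfg : f ~[l] g) (hh : h =O[l] g) :
    Tendsto (fun x => h x / f x - h x / g x) l (𝓝 0) := by
  have hdiv : (fun x => h x / f x) ~[l] fun x => h x / g x := IsEquivalent.refl.div hfg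
  have hbdd : (fun x => h x / g x) =O[l] fun _ => (1 : ℝ) := by
    refine (hh.mul (isBigO_refl (fun x => (g x)⁻¹) l)).trans (IsBigO.of_bound 1 ?_)
    filter_upwards with x
    rcases eq_or_ne (g x) 0 with hx | hx <;> simp [hx]
  exact (isLittleO_one_iff ℝ).mp (hdiv.isLittleO.trans_isBigO hbdd)

lemma isBigO_sq_of_eventually_mul_le {f g : α → ℝ} {c : ℝ} (hc : 0 < c)
    (hf : ∀ᶠ x in l, 0 ≤ f x) (hfg : ∀ᶠ x in l, c * f x ≤ g x) :
    (fun x => f x ^ 2) =O[l] fun x => g x ^ 2 := by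
  refine IsBigO.of_bound (c⁻¹ ^ 2) ?_
  filter_upwards [hf, hfg] with x hfx hfgx
  rw [Real.norm_of_nonneg (by positivity), Real.norm_of_nonneg (by positivity), ← mul_pow]
  exact pow_le_pow_left₀ hfx ((le_inv_mul_iff₀ hc).2 hfgx) 2

lemma isBigO_sq_sum_mul_sq {ι : Type*} {s : Finset ι} {w : ι → ℝ} (hw : ∀ u ∈ s, 0 < w u)
    {f : α → ℝ} {b : ι → α → ℝ} {c : ℝ} (hc : 0 < c) (hf : ∀ᶠ x in l, 0 ≤ f x)
    (hcb : ∀ᶠ x in l, c * f x ≤ ∑ u ∈ s, b u x) :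
    (fun x => f x ^ 2) =O[l] fun x => ∑ u ∈ s, w u * b u x ^ 2 := by
  have h_sum : (fun x => f x ^ 2) =O[l] fun x => (∑ u ∈ s, b u x) ^ 2 :=
    isBigO_sq_of_eventually_mul_le hc hf hcb
  have h_sq : (fun x => (∑ u ∈ s, b u x) ^ 2) =O[l] fun x => ∑ u ∈ s, b u x ^ 2 := by
    refine IsBigO.of_bound s.card (Eventually.of_forall fun x => ?_)
    rw [Real.norm_of_nonneg (by positivity),
      Real.norm_of_nonneg (Finset.sum_nonneg fun u _ => sq_nonneg _)]
    exact sq_sum_le_card_mul_sum_sq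
  have h_weight : (fun x => ∑ u ∈ s, b u x ^ 2) =O[l] fun x => ∑ u ∈ s, w u * b u x ^ 2 := by
    refine IsBigO.fun_sum fun u hu => IsBigO.of_bound (w u)⁻¹ (Eventually.of_forall fun x => ?_)
    have hle : w u * b u x ^ 2 ≤ ∑ v ∈ s, w v * b v x ^ 2 :=
      Finset.single_le_sum (f := fun v => w v * b v x ^ 2)
        (fun v hv => mul_nonneg (hw v hv).le (sq_nonneg _)) hu
    rw [Real.norm_of_nonneg (sq_nonneg _), Real.norm_of_nonneg ((mul_nonneg (hw u hu).le
      (sq_nonneg _)).trans hle), le_inv_mul_iff₀ (hw u hu)]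
    exact hle
  exact h_sum.trans (h_sq.trans h_weight)

lemma isLittleO_natCast_sq : (fun M : ℕ => (M : ℝ)) =o[atTop] fun M : ℕ => (M : ℝ) ^ 2 := by
  simpa [Function.comp_def] using
    (isLittleO_pow_pow_atTop_of_lt (𝕜 := ℝ) one_lt_two).comp_tendsto tendsto_natCast_atTop_atTop

lemma isBigO_natCast_of_div_le {f : ℕ → ℝ} {C : ℝ} (hf : ∀ M, 0 ≤ f M)
    (hC : ∀ M : ℕ, f M / M ≤ C) : f =O[atTop] fun M => (M : ℝ) := by
  refine IsBigO.of_bound C ?_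
  filter_upwards [eventually_gt_atTop 0] with M hM
  have hM' : (0 : ℝ) < M := Nat.cast_pos.2 hM
  rw [Real.norm_of_nonneg (hf M), Real.norm_of_nonneg hM'.le, ← div_le_iff₀ hM']
  exact hC M

lemma isLittleO_natCast_of_tendsto_div {f : ℕ → ℝ}
    (hf : Tendsto (fun M : ℕ => f M / M) atTop (𝓝 0)) : f =o[atTop] fun M => (M : ℝ) := by
  refine (isLittleO_iff_tendsto' ?_).2 hf
  filter_upwards [eventually_gt_atTop 0] with M hM h0
  exact absurd h0 (Nat.cast_ne_zero.2 hM.ne')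

end Asymptotics

lemma exists_pos_eventually_mul_le_of_liminf_pos {f : ℕ → ℝ} (hf : ∀ M, 0 ≤ f M)
    (h : 0 < liminf (fun M : ℕ => f M / M) atTop) :
    ∃ δ > 0, ∀ᶠ M : ℕ in atTop, δ * M ≤ f M := by
  refine ⟨_, half_pos h, ?_⟩
  have hbdd : IsBoundedUnder (· ≥ ·) atTop fun M : ℕ => f M / M :=
    isBoundedUnder_of ⟨0, fun M => div_nonneg (hf M) M.cast_nonneg⟩
  filter_upwards [eventually_lt_of_lt_liminf (half_lt_self h) hbdd, eventually_gt_atTop 0]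
    with M hM hM0
  exact ((lt_div_iff₀ (Nat.cast_pos.2 hM0)).1 hM).le

namespace Matrix

section RCLike

variable {n 𝕜 : Type*} [DecidableEq n] [RCLike 𝕜]

open scoped MatrixOrder in
lemma PosSemidef.trace_mul_nonneg [Fintype n] {A B : Matrix n n 𝕜} (hA : A.PosSemidef)
    (hB : B.PosSemidef) : 0 ≤ (A * B).trace := by
  have hS : (CFC.sqrt A).IsHermitian := (CFC.sqrt_nonneg A).posSemidef.isHermitian
  rw [← CFC.sqrt_mul_sqrt_self A hA.nonneg, Matrix.mul_assoc, trace_mul_comm, Matrix.mul_assoc]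
  simpa [hS.eq, Matrix.mul_assoc] using (hB.conjTranspose_mul_mul_same (CFC.sqrt A)).trace_nonneg

lemma re_trace_mul_le_of_posSemidef_sub [Fintype n] {A S : Matrix n n 𝕜} {c : ℝ}
    (hA : ((c : 𝕜) • 1 - A).PosSemidef) (hS : S.PosSemidef) :
    RCLike.re (A * S).trace ≤ c * RCLike.re S.trace := by
  have := (RCLike.nonneg_iff.1 (hA.trace_mul_nonneg hS)).1
  simpa [Matrix.sub_mul, trace_sub, trace_smul, RCLike.smul_re] using this

lemma re_dotProduct_mulVec_le_of_posSemidef_sub [Fintype n] {A : Matrix n n 𝕜} {c : ℝ}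
    (hA : ((c : 𝕜) • 1 - A).PosSemidef) (x : n → 𝕜) :
    RCLike.re (star x ⬝ᵥ A *ᵥ x) ≤ c * RCLike.re (star x ⬝ᵥ x) := by
  have := (RCLike.nonneg_iff.1 (hA.dotProduct_mulVec_nonneg x)).1
  simpa [sub_mulVec, smul_mulVec, RCLike.smul_re] using this

lemma re_apply_self_le_of_posSemidef_sub {A : Matrix n n 𝕜} {c : ℝ}
    (hA : ((c : 𝕜) • 1 - A).PosSemidef) (i : n) : RCLike.re (A i i) ≤ c := by
  have := (RCLike.nonneg_iff.1 (hA.diag_nonneg (i := i))).1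
  simpa [RCLike.smul_re] using this

lemma le_re_apply_self_of_posSemidef_sub {A : Matrix n n 𝕜} {c : ℝ}
    (hA : (A - (c : 𝕜) • 1).PosSemidef) (i : n) : c ≤ RCLike.re (A i i) := by
  have := (RCLike.nonneg_iff.1 (hA.diag_nonneg (i := i))).1
  simpa [RCLike.smul_re] using this

lemma PosSemidef.smul_one_sub_of_le {A : Matrix n n 𝕜} {c c' : ℝ}
    (hA : ((c : 𝕜) • 1 - A).PosSemidef) (hc : c ≤ c') : ((c' : 𝕜) • 1 - A).PosSemidef := by
  have h : (c' : 𝕜) • 1 - A = ((c : 𝕜) • 1 - A) + ((c' - c : ℝ) : 𝕜) • 1 := by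
    push_cast; module
  rw [h]
  exact hA.add (PosSemidef.one.smul (RCLike.ofReal_nonneg.2 (sub_nonneg.2 hc)))

lemma exists_nonneg_forall_posSemidef_smul_one_sub {ι : Type*}
    {A : ι → (M : ℕ) → Matrix (Fin M) (Fin M) 𝕜}
    (h : ∀ u, ∃ C : ℝ, ∀ M, ((C : 𝕜) • 1 - A u M).PosSemidef) :
    ∃ C : ι → ℝ, (∀ u, 0 ≤ C u) ∧ ∀ u M, ((C u : 𝕜) • 1 - A u M).PosSemidef := by
  choose C hC using h
  exact ⟨fun u => max (C u) 0, fun u => le_max_right _ _,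
    fun u M => (hC u M).smul_one_sub_of_le (le_max_left _ _)⟩

lemma PosSemidef.smul_one_sub_smul {X : Matrix n n 𝕜} {c k : ℝ}
    (hX : ((c : 𝕜) • 1 - X).PosSemidef) (hk : 0 ≤ k) :
    (((k * c : ℝ) : 𝕜) • 1 - (k : 𝕜) • X).PosSemidef := by
  have h := hX.smul ((RCLike.ofReal_nonneg (K := 𝕜)).2 hk)
  rwa [smul_sub, smul_smul, ← RCLike.ofReal_mul] at h

lemma diagonal_ofReal_conjTranspose (x : n → ℝ) :
    (diagonal fun i => (x i : 𝕜))ᴴ = diagonal fun i => (x i : 𝕜) := by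
  simp [diagonal_conjTranspose]

lemma posSemidef_smul_one_sub_diagonal_mul_mul_diagonal [Fintype n] {A : Matrix n n 𝕜}
    {c d : ℝ} (hc : 0 ≤ c) (hA : ((c : 𝕜) • 1 - A).PosSemidef) {ν : n → ℝ}
    (hν : ∀ i, ν i ^ 2 ≤ d) :
    (((c * d : ℝ) : 𝕜) • 1 - diagonal (fun i => (ν i : 𝕜)) * A *
      diagonal (fun i => (ν i : 𝕜))).PosSemidef := by
  set N := diagonal fun i => (ν i : 𝕜)
  have hN : Nᴴ = N := diagonal_ofReal_conjTranspose ν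
  have hsplit : ((c * d : ℝ) : 𝕜) • 1 - N * A * N =
      N * ((c : 𝕜) • 1 - A) * Nᴴ + diagonal fun i => ((c * (d - ν i ^ 2) : ℝ) : 𝕜) := by
    ext i j
    rcases eq_or_ne i j with rfl | hij
    · simp [N, hN, RCLike.algebraMap_eq_ofReal, RCLike.real_smul_eq_coe_mul]; ring
    · simp [N, hN, hij]
  rw [hsplit]
  refine (hA.mul_mul_conjTranspose_same N).add (posSemidef_diagonal_iff.2 fun i => ?_)
  exact RCLike.ofReal_nonneg.2 (mul_nonneg hc (sub_nonneg.2 (hν i)))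

lemma PosSemidef.re_trace_mul_add_re_dotProduct_mulVec_add_nonneg [Fintype n]
    {A S : Matrix n n 𝕜} (hA : A.PosSemidef) (hS : S.PosSemidef) (x y : n → 𝕜) :
    0 ≤ RCLike.re (A * S).trace + RCLike.re (star x ⬝ᵥ A *ᵥ x)
      + RCLike.re (star y ⬝ᵥ S *ᵥ y) :=
  add_nonneg (add_nonneg (RCLike.nonneg_iff.1 (hA.trace_mul_nonneg hS)).1
    (hA.re_dotProduct_nonneg x)) (hS.re_dotProduct_nonneg y)

lemma isBigO_re_trace_mul_add_re_dotProduct_mulVec_add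
    {A S : (M : ℕ) → Matrix (Fin M) (Fin M) 𝕜} {x y : (M : ℕ) → Fin M → 𝕜} {c κ : ℝ}
    (hA : ∀ M, (A M).PosSemidef) (hAc : ∀ M, ((c : 𝕜) • 1 - A M).PosSemidef)
    (hS : ∀ M, (S M).PosSemidef) (hSκ : ∀ M, ((κ : 𝕜) • 1 - S M).PosSemidef)
    (hS_tr : (fun M => RCLike.re (S M).trace) =O[atTop] fun M => (M : ℝ))
    (hx : (fun M => RCLike.re (star (x M) ⬝ᵥ x M)) =O[atTop] fun M => (M : ℝ))
    (hy : (fun M => RCLike.re (star (y M) ⬝ᵥ y M)) =O[atTop] fun M => (M : ℝ)) :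
    (fun M => RCLike.re (A M * S M).trace + RCLike.re (star (x M) ⬝ᵥ A M *ᵥ x M)
      + RCLike.re (star (y M) ⬝ᵥ S M *ᵥ y M)) =O[atTop] fun M => (M : ℝ) :=
  IsBigO.of_nonneg_of_le
    (fun M => (hA M).re_trace_mul_add_re_dotProduct_mulVec_add_nonneg (hS M) (x M) (y M))
    (fun M => add_le_add (add_le_add (re_trace_mul_le_of_posSemidef_sub (hAc M) (hS M))
      (re_dotProduct_mulVec_le_of_posSemidef_sub (hAc M) (x M)))
      (re_dotProduct_mulVec_le_of_posSemidef_sub (hSκ M) (y M)))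
    (((hS_tr.const_mul_left c).add (hx.const_mul_left c)).add (hy.const_mul_left κ))

end RCLike

section Complex

variable {m : Type*}

lemma PosSemidef.re_apply_self_nonneg {A : Matrix m m ℂ} (hA : A.PosSemidef) (i : m) :
    0 ≤ (A i i).re :=
  (Complex.nonneg_iff.1 hA.diag_nonneg).1

variable [DecidableEq m]

lemma IsHermitian.diagonal_diag_eq {A : Matrix m m ℂ} (hA : A.IsHermitian) :
    diagonal A.diag = diagonal fun i => ((A i i).re : ℂ) :=
  congrArg diagonal (funext fun i => (hA.coe_re_apply_self i).symm)

lemma IsHermitian.diagonal_diag_inv_eq {A : Matrix m m ℂ} (hA : A.IsHermitian) :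
    diagonal A.diag⁻¹ = diagonal fun i => ((A i i).re : ℂ)⁻¹ :=
  congrArg diagonal (funext fun i => congrArg Inv.inv (hA.coe_re_apply_self i).symm)

variable [Fintype m]

lemma IsHermitian.diagonal_diag_mul_diagonal_diag_inv {A Q : Matrix m m ℂ} (hA : A.IsHermitian)
    (hQ : Q.IsHermitian) :
    diagonal A.diag * diagonal Q.diag⁻¹ =
      diagonal fun i => (((A i i).re / (Q i i).re : ℝ) : ℂ) := by
  rw [hA.diagonal_diag_eq, hQ.diagonal_diag_inv_eq, diagonal_mul_diagonal]
  push_cast; rfl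

lemma IsHermitian.diagonal_diag_inv_mul_diagonal_diag {A Q : Matrix m m ℂ} (hA : A.IsHermitian)
    (hQ : Q.IsHermitian) :
    diagonal Q.diag⁻¹ * diagonal A.diag =
      diagonal fun i => (((A i i).re / (Q i i).re : ℝ) : ℂ) := by
  rw [← hA.diagonal_diag_mul_diagonal_diag_inv hQ, diagonal_mul_diagonal, diagonal_mul_diagonal]
  simp_rw [mul_comm]

lemma re_trace_diagonal_ofReal (x : m → ℝ) :
    (diagonal fun i => (x i : ℂ)).trace.re = ∑ i, x i := by
  simp [trace_diagonal, Complex.re_sum]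

lemma IsHermitian.re_trace_diagonal_diag_mul_diagonal_diag {A B : Matrix m m ℂ}
    (hA : A.IsHermitian) (hB : B.IsHermitian) :
    (diagonal A.diag * diagonal B.diag).trace.re = ∑ i, (A i i).re * (B i i).re := by
  rw [hA.diagonal_diag_eq, hB.diagonal_diag_eq, diagonal_mul_diagonal]
  simp

lemma IsHermitian.re_trace_diagonal_diag_mul_inv_mul_diagonal_diag {A B Q : Matrix m m ℂ}
    (hA : A.IsHermitian) (hB : B.IsHermitian) (hQ : Q.IsHermitian) :
    (diagonal A.diag * diagonal Q.diag⁻¹ * diagonal B.diag).trace.re =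
      ∑ i, (A i i).re * (B i i).re / (Q i i).re := by
  rw [hA.diagonal_diag_mul_diagonal_diag_inv hQ, hB.diagonal_diag_eq, diagonal_mul_diagonal]
  simp only [← Complex.ofReal_mul, re_trace_diagonal_ofReal]
  exact Finset.sum_congr rfl fun i _ => div_mul_eq_mul_div _ _ _

lemma trace_diagonal_diag_mul_inv_mul_mul_inv_mul_diagonal_diag (A Q : Matrix m m ℂ) :
    (diagonal A.diag * diagonal Q.diag⁻¹ * Q * diagonal Q.diag⁻¹ * diagonal A.diag).trace =
      (diagonal A.diag * diagonal Q.diag⁻¹ * diagonal A.diag).trace := by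
  simp only [trace, diag, mul_diagonal, diagonal_mul_diagonal, diagonal_mul, diagonal_apply_eq,
    Pi.inv_apply]
  refine Finset.sum_congr rfl fun i _ => ?_
  rw [mul_assoc (A i i), mul_assoc (A i i), inv_mul_mul_inv]

lemma IsHermitian.diagonal_diag_mul_inv_mul_mul_inv_mul_diagonal_diag_eq {A Q : Matrix m m ℂ}
    (hA : A.IsHermitian) (hQ : Q.IsHermitian) :
    diagonal A.diag * diagonal Q.diag⁻¹ * Q * diagonal Q.diag⁻¹ * diagonal A.diag =
      (diagonal fun i => (((A i i).re / (Q i i).re : ℝ) : ℂ)) * Q *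
        diagonal fun i => (((A i i).re / (Q i i).re : ℝ) : ℂ) := by
  rw [Matrix.mul_assoc _ (diagonal Q.diag⁻¹), hA.diagonal_diag_inv_mul_diagonal_diag hQ,
    hA.diagonal_diag_mul_diagonal_diag_inv hQ]

lemma PosSemidef.diagonal_diag_mul_inv_mul_mul_inv_mul_diagonal_diag {A Q : Matrix m m ℂ}
    (hQ : Q.PosSemidef) (hA : A.IsHermitian) :
    (diagonal A.diag * diagonal Q.diag⁻¹ * Q * diagonal Q.diag⁻¹ *
      diagonal A.diag).PosSemidef := by
  rw [hA.diagonal_diag_mul_inv_mul_mul_inv_mul_diagonal_diag_eq hQ.isHermitian]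
  convert hQ.mul_mul_conjTranspose_same (diagonal fun i => (((A i i).re / (Q i i).re : ℝ) : ℂ))
  exact (diagonal_ofReal_conjTranspose _).symm

lemma posSemidef_smul_one_sub_diagonal_diag_mul_inv_mul_mul_inv_mul_diagonal_diag
    {A Q : Matrix m m ℂ} (hA : A.IsHermitian) (hQ : Q.IsHermitian) {c d : ℝ} (hc : 0 ≤ c)
    (hQc : ((c : ℂ) • 1 - Q).PosSemidef) (hd : ∀ i, ((A i i).re / (Q i i).re) ^ 2 ≤ d) :
    (((c * d : ℝ) : ℂ) • 1 - diagonal A.diag * diagonal Q.diag⁻¹ * Q * diagonal Q.diag⁻¹ *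
      diagonal A.diag).PosSemidef := by
  rw [hA.diagonal_diag_mul_inv_mul_mul_inv_mul_diagonal_diag_eq hQ]
  exact posSemidef_smul_one_sub_diagonal_mul_mul_diagonal hc hQc hd

lemma IsHermitian.sq_re_trace_le_card_mul_re_trace_diagonal_diag_mul_diagonal_diag
    {A : Matrix m m ℂ} (hA : A.IsHermitian) :
    A.trace.re ^ 2 ≤ Fintype.card m * (diagonal A.diag * diagonal A.diag).trace.re := by
  rw [hA.re_trace_diagonal_diag_mul_diagonal_diag hA, trace, Complex.re_sum]
  simpa [sq] using sq_sum_le_card_mul_sum_sq (s := Finset.univ) (f := fun i => (A i i).re)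

lemma PosSemidef.re_trace_diagonal_diag_mul_diagonal_diag_le {A B : Matrix m m ℂ}
    (hA : A.PosSemidef) (hB : B.PosSemidef) {c d : ℝ} (hAc : ((c : ℂ) • 1 - A).PosSemidef)
    (hBd : ((d : ℂ) • 1 - B).PosSemidef) :
    (diagonal A.diag * diagonal B.diag).trace.re ≤ c * d * Fintype.card m := by
  rw [hA.isHermitian.re_trace_diagonal_diag_mul_diagonal_diag hB.isHermitian, mul_comm,
    ← nsmul_eq_mul, ← Finset.card_univ, ← Finset.sum_const]
  exact Finset.sum_le_sum fun i _ => mul_le_mul (re_apply_self_le_of_posSemidef_sub hAc i)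
    (re_apply_self_le_of_posSemidef_sub hBd i) (hB.re_apply_self_nonneg i)
    ((hA.re_apply_self_nonneg i).trans (re_apply_self_le_of_posSemidef_sub hAc i))

end Complex

end Matrix

lemma Complex.normSq_star_dotProduct_self {n : Type*} [Fintype n] (v : n → ℂ) :
    normSq (star v ⬝ᵥ v) = (star v ⬝ᵥ v).re ^ 2 := by
  rw [normSq_apply, ← (nonneg_iff.1 (dotProduct_star_self_nonneg v)).2]
  ring

/-!
The SINR as a function of scalars: for the model, `a = tr(D_{jk} Λ D_{jk})`, `n = ‖h̄_{jk}‖²`,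
`s = tr Σ_{jk}`, and for each user `u`
`T u = tr(R_u Σ_{jk}) + h̄_{jk}ᴴ R_u h̄_{jk} + h̄_uᴴ Σ_{jk} h̄_u`, `q u = |h̄_{jk}ᴴ h̄_u|²`,
`g u = Re(h̄_{jk}ᴴ h̄_u)` and `b u = tr(D_u Λ D_{jk})`.
Then `interference` is `χ_u` and `sinr` is `γ^{ew}`.
-/

noncomputable section SINR

variable {ι : Type*} [DecidableEq ι] (jk : ι) (P : Finset ι) (p : ι → ℝ) (τ σ2 : ℝ)

def interference (T q g b : ℝ) (u : ι) : ℝ :=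
  T + q + if u ∈ P then p jk * p u * τ ^ 2 * b ^ 2 + 2 * Real.sqrt (p jk * p u) * τ * b * g else 0

def sinrDenom [Fintype ι] (a n s : ℝ) (T q g b : ι → ℝ) : ℝ :=
  (∑ u, p u * interference jk P p τ (T u) (q u) (g u) (b u) u)
    - p jk * (p jk * τ * a + n) ^ 2 + σ2 * (s + n)

def sinr [Fintype ι] (a n s : ℝ) (T q g b : ι → ℝ) : ℝ :=
  p jk * (p jk * τ * a + n) ^ 2 / sinrDenom jk P p τ σ2 a n s T q g b

variable {jk P p τ}

lemma interference_nonneg (hp : ∀ u, 0 ≤ p u) {T q g b : ℝ} (hT : 0 ≤ T) (hqg : g ^ 2 ≤ q) (u : ι) :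
    0 ≤ interference jk P p τ T q g b u := by
  unfold interference
  split_ifs
  · have hsq : Real.sqrt (p jk * p u) ^ 2 = p jk * p u := Real.sq_sqrt (mul_nonneg (hp jk) (hp u))
    calc 0 ≤ T + (q - g ^ 2) + (Real.sqrt (p jk * p u) * τ * b + g) ^ 2 := by
          have := sub_nonneg.2 hqg
          positivity
      _ = _ := by rw [add_sq, mul_pow, mul_pow, hsq]; ring
  · linarith [sq_nonneg g]

lemma interference_self (hjkP : jk ∈ P) (hp : 0 ≤ p jk) (T a n : ℝ) :
    interference jk P p τ T (n ^ 2) n a jk = T + (p jk * τ * a + n) ^ 2 := by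
  rw [interference, if_pos hjkP, Real.sqrt_mul_self hp]
  ring

lemma sinrDenom_eq_sum_erase [Fintype ι] (hjkP : jk ∈ P) (hp : 0 ≤ p jk) {a n s : ℝ}
    {T q g b : ι → ℝ} (hs : s = p jk * τ * a) (hq : q jk = n ^ 2) (hg : g jk = n) (hb : b jk = a) :
    sinrDenom jk P p τ σ2 a n s T q g b =
      ∑ u ∈ Finset.univ.erase jk, p u * interference jk P p τ (T u) (q u) (g u) (b u) u
        + p jk * T jk + σ2 * (p jk * τ * a + n) := by
  rw [sinrDenom, ← Finset.add_sum_erase _ _ (Finset.mem_univ jk), hq, hg, hb,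
    interference_self hjkP hp, hs]
  ring

lemma sum_erase_interference_eq [Fintype ι] (T q g b : ι → ℝ) :
    ∑ u ∈ Finset.univ.erase jk, p u * interference jk P p τ (T u) (q u) (g u) (b u) u =
      ∑ u ∈ P.erase jk, p u ^ 2 * p jk * τ ^ 2 * b u ^ 2
        + ∑ u ∈ Finset.univ.erase jk, p u * (T u + q u)
        + ∑ u ∈ P.erase jk, 2 * p u * Real.sqrt (p jk * p u) * τ * b u * g u := by
  have hP : P.erase jk = (Finset.univ.erase jk).filter (· ∈ P) := by
    ext u; simp [and_comm]
  simp only [interference, mul_add, mul_ite, mul_zero, Finset.sum_add_distrib,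
    ← Finset.sum_filter, ← hP]
  rw [Finset.sum_congr rfl fun u _ => show p u * (p jk * p u * τ ^ 2 * b u ^ 2) =
    p u ^ 2 * p jk * τ ^ 2 * b u ^ 2 by ring, Finset.sum_congr rfl fun u _ =>
    show p u * (2 * Real.sqrt (p jk * p u) * τ * b u * g u) =
    2 * p u * Real.sqrt (p jk * p u) * τ * b u * g u by ring]
  ring

lemma sinrDenom_pos [Fintype ι] (hjkP : jk ∈ P) (hp : ∀ u, 0 ≤ p u) (hσ2 : 0 < σ2)
    {a n s : ℝ} {T q g b : ι → ℝ} (hs : s = p jk * τ * a) (hq : q jk = n ^ 2) (hg : g jk = n)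
    (hb : b jk = a) (hT : ∀ u, 0 ≤ T u) (hqg : ∀ u, g u ^ 2 ≤ q u)
    (ht : 0 < p jk * τ * a + n) : 0 < sinrDenom jk P p τ σ2 a n s T q g b := by
  rw [sinrDenom_eq_sum_erase σ2 hjkP (hp jk) hs hq hg hb]
  have hχ := Finset.sum_nonneg fun u (_ : u ∈ Finset.univ.erase jk) => mul_nonneg (hp u)
    (interference_nonneg (jk := jk) (P := P) (τ := τ) hp (b := b u) (hT u) (hqg u) u)
  linarith [mul_nonneg (hp jk) (hT jk), mul_pos hσ2 ht]

lemma isLittleO_sinrDenom_sub [Fintype ι] (hjkP : jk ∈ P) (hp : ∀ u, 0 ≤ p u)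
    {a n s : ℕ → ℝ} {T q g b : ι → ℕ → ℝ}
    (hs : ∀ M, s M = p jk * τ * a M) (hqjk : ∀ M, q jk M = n M ^ 2) (hgjk : ∀ M, g jk M = n M)
    (hbjk : ∀ M, b jk M = a M) (hn : n =O[atTop] fun M => (M : ℝ))
    (hT : ∀ u, T u =O[atTop] fun M => (M : ℝ))
    (hq : ∀ u ≠ jk, q u =o[atTop] fun M => (M : ℝ) ^ 2)
    (hg : ∀ u ≠ jk, g u =o[atTop] fun M => (M : ℝ))
    (hb : ∀ u, b u =O[atTop] fun M => (M : ℝ)) :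
    (fun M => sinrDenom jk P p τ σ2 (a M) (n M) (s M) (T · M) (q · M) (g · M) (b · M)
      - ∑ u ∈ P.erase jk, p u ^ 2 * p jk * τ ^ 2 * b u M ^ 2) =o[atTop]
      fun M => (M : ℝ) ^ 2 := by
  have hsq {f : ℕ → ℝ} (hf : f =O[atTop] fun M => (M : ℝ)) :
      f =o[atTop] fun M => (M : ℝ) ^ 2 :=
    hf.trans_isLittleO isLittleO_natCast_sq
  have ha : a =O[atTop] fun M => (M : ℝ) := (hb jk).congr_left hbjk
  have hTq : (fun M => ∑ u ∈ Finset.univ.erase jk, p u * (T u M + q u M)) =o[atTop]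
      fun M => (M : ℝ) ^ 2 :=
    IsLittleO.fun_sum fun u hu =>
      ((hsq (hT u)).add (hq u (Finset.ne_of_mem_erase hu))).const_mul_left _
  have hbg : (fun M => ∑ u ∈ P.erase jk, 2 * p u * Real.sqrt (p jk * p u) * τ * b u M * g u M)
      =o[atTop] fun M => (M : ℝ) ^ 2 := by
    refine IsLittleO.fun_sum fun u hu => ?_
    have := ((hb u).mul_isLittleO (hg u (Finset.ne_of_mem_erase hu))).const_mul_left
      (2 * p u * Real.sqrt (p jk * p u) * τ)
    simpa [sq, mul_assoc] using this
  have ht : (fun M => p jk * τ * a M + n M) =o[atTop] fun M => (M : ℝ) ^ 2 :=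
    hsq ((ha.const_mul_left _).add hn)
  refine (((hTq.add hbg).add ((hsq (hT jk)).const_mul_left (p jk))).add
    (ht.const_mul_left σ2)).congr_left fun M => ?_
  rw [sinrDenom_eq_sum_erase σ2 hjkP (hp jk) (hs M) (hqjk M) (hgjk M) (hbjk M),
    sum_erase_interference_eq]
  ring

theorem tendsto_sinr [Fintype ι] (hjkP : jk ∈ P) (hp : ∀ u, 0 < p u) (hτ : 0 < τ)
    (hσ2 : 0 < σ2) {a n s : ℕ → ℝ} {T q g b : ι → ℕ → ℝ}
    (hs : ∀ M, s M = p jk * τ * a M) (ha : ∃ δ > 0, ∀ᶠ M : ℕ in atTop, δ * (M : ℝ) ≤ a M)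
    (hn0 : ∀ M, 0 ≤ n M) (hn : n =O[atTop] fun M => (M : ℝ))
    (hT0 : ∀ u M, 0 ≤ T u M) (hT : ∀ u, T u =O[atTop] fun M => (M : ℝ))
    (hqg : ∀ u M, g u M ^ 2 ≤ q u M) (hqjk : ∀ M, q jk M = n M ^ 2) (hgjk : ∀ M, g jk M = n M)
    (hq : ∀ u ≠ jk, q u =o[atTop] fun M => (M : ℝ) ^ 2)
    (hg : ∀ u ≠ jk, g u =o[atTop] fun M => (M : ℝ))
    (hb : ∀ u, b u =O[atTop] fun M => (M : ℝ)) (hbjk : ∀ M, b jk M = a M) :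
    ((∀ u ∈ P.erase jk, b u =o[atTop] fun M => (M : ℝ)) →
      Tendsto (fun M => sinr jk P p τ σ2 (a M) (n M) (s M) (T · M) (q · M) (g · M) (b · M))
        atTop atTop) ∧
    ((∃ c > 0, ∀ᶠ M : ℕ in atTop, c * (M : ℝ) ≤ ∑ u ∈ P.erase jk, b u M) →
      Tendsto (fun M => sinr jk P p τ σ2 (a M) (n M) (s M) (T · M) (q · M) (g · M) (b · M) -
        (p jk ^ 2 * τ * a M + p jk * n M) /
        ∑ u ∈ P.erase jk, p u ^ 2 * p jk * τ ^ 2 * b u M ^ 2 / (p jk * τ * a M + n M))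
        atTop (𝓝 0)) := by
  set t : ℕ → ℝ := fun M => p jk * τ * a M + n M
  set den : ℕ → ℝ :=
    fun M => sinrDenom jk P p τ σ2 (a M) (n M) (s M) (T · M) (q · M) (g · M) (b · M)
  set S : ℕ → ℝ := fun M => ∑ u ∈ P.erase jk, p u ^ 2 * p jk * τ ^ 2 * b u M ^ 2
  have hp0 u : 0 ≤ p u := (hp u).le
  have hE := isLittleO_sinrDenom_sub σ2 hjkP hp0 hs hqjk hgjk hbjk hn hT hq hg hb
  obtain ⟨δ, hδ, hδa⟩ := ha
  have ht_lb : ∀ᶠ M in atTop, p jk * τ * δ * M ≤ t M := by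
    filter_upwards [hδa] with M hM
    nlinarith [hn0 M, mul_le_mul_of_nonneg_left hM (mul_nonneg (hp0 jk) hτ.le)]
  have hpτδ : 0 < p jk * τ * δ := mul_pos (mul_pos (hp jk) hτ) hδ
  have ht_pos : ∀ᶠ M in atTop, 0 < t M := by
    filter_upwards [ht_lb, eventually_gt_atTop 0] with M hM hM0
    exact lt_of_lt_of_le (mul_pos hpτδ (Nat.cast_pos.2 hM0)) hM
  have ht : t =O[atTop] fun M => (M : ℝ) :=
    (((hb jk).congr_left hbjk).const_mul_left _).add hn
  constructor
  · intro hbo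
    have hS : S =o[atTop] fun M => (M : ℝ) ^ 2 := IsLittleO.fun_sum fun u hu =>
      ((hbo u hu).pow two_pos).const_mul_left _
    have hMt : (fun M : ℕ => (M : ℝ) ^ 2) =O[atTop] fun M => t M ^ 2 :=
      isBigO_sq_of_eventually_mul_le hpτδ (Eventually.of_forall fun M => M.cast_nonneg) ht_lb
    have hden_pos : ∀ᶠ M in atTop, 0 < den M := by
      filter_upwards [ht_pos] with M hM using sinrDenom_pos σ2 hjkP hp0 hσ2 (hs M) (hqjk M)
        (hgjk M) (hbjk M) (fun u => hT0 u M) (fun u => hqg u M) hM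
    exact tendsto_const_mul_div_atTop_of_isLittleO (hp jk) hden_pos
      (by filter_upwards [ht_pos] with M hM using pow_pos hM 2)
      (((hS.add hE).congr_left fun M => by ring).trans_isBigO hMt)
  · rintro ⟨c, hc, hcb⟩
    have hS : (fun M : ℕ => (M : ℝ) ^ 2) =O[atTop] S :=
      isBigO_sq_sum_mul_sq (fun u _ => mul_pos (mul_pos (pow_pos (hp u) 2) (hp jk))
        (pow_pos hτ 2)) hc
        (Eventually.of_forall fun M => M.cast_nonneg) hcb
    refine (tendsto_div_sub_div_of_isEquivalent (hE.trans_isBigO hS)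
      (((ht.pow 2).const_mul_left (p jk)).trans hS)).congr fun M => ?_
    rw [sinr, ← Finset.sum_div, div_div_eq_mul_div]
    ring

end SINR

noncomputable section PilotCovariance

variable {ι m : Type*} [DecidableEq m]

/-- The matrix `Ψ⁻¹` of the paper. -/
def pilotCov (P : Finset ι) (p : ι → ℝ) (τ σ2 : ℝ) (R : ι → Matrix m m ℂ) : Matrix m m ℂ :=
  (∑ u ∈ P, ((p u * τ : ℝ) : ℂ) • R u) + ((σ2 : ℝ) : ℂ) • 1

variable {P : Finset ι} {p : ι → ℝ} {τ σ2 : ℝ} {R : ι → Matrix m m ℂ}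

lemma pilotCov_sub_smul_one_posSemidef (hpτ : ∀ u, 0 ≤ p u * τ) (hR : ∀ u, (R u).PosSemidef) :
    (pilotCov P p τ σ2 R - ((σ2 : ℝ) : ℂ) • 1).PosSemidef := by
  rw [pilotCov, add_sub_cancel_right]
  exact posSemidef_sum _ fun u _ => (hR u).smul (Complex.zero_le_real.2 (hpτ u))

lemma pilotCov_posSemidef (hpτ : ∀ u, 0 ≤ p u * τ) (hσ2 : 0 ≤ σ2) (hR : ∀ u, (R u).PosSemidef) :
    (pilotCov P p τ σ2 R).PosSemidef := by
  simpa using (pilotCov_sub_smul_one_posSemidef (P := P) (σ2 := σ2) hpτ hR).add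
    (PosSemidef.one.smul (Complex.zero_le_real.2 hσ2))

lemma le_re_pilotCov_apply_self (hpτ : ∀ u, 0 ≤ p u * τ) (hR : ∀ u, (R u).PosSemidef) (i : m) :
    σ2 ≤ (pilotCov P p τ σ2 R i i).re :=
  le_re_apply_self_of_posSemidef_sub (pilotCov_sub_smul_one_posSemidef hpτ hR) i

lemma smul_one_sub_pilotCov_posSemidef (hpτ : ∀ u, 0 ≤ p u * τ) {C : ι → ℝ}
    (hRC : ∀ u, ((C u : ℂ) • 1 - R u).PosSemidef) :
    ((((∑ u ∈ P, p u * τ * C u) + σ2 : ℝ) : ℂ) • 1 - pilotCov P p τ σ2 R).PosSemidef := by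
  have h : (((∑ u ∈ P, p u * τ * C u) + σ2 : ℝ) : ℂ) • 1 - pilotCov P p τ σ2 R =
      ∑ u ∈ P, ((p u * τ : ℝ) : ℂ) • ((C u : ℂ) • 1 - R u) := by
    simp only [pilotCov, smul_sub, Finset.sum_sub_distrib, smul_smul, ← Finset.sum_smul]
    push_cast
    rw [add_smul]
    abel
  rw [h]
  exact posSemidef_sum _ fun u _ => (hRC u).smul (Complex.zero_le_real.2 (hpτ u))

end PilotCovariance

noncomputable section EWMMSE

variable {ι m : Type*} [Fintype m] [DecidableEq m] (P : Finset ι) (p : ι → ℝ) (τ σ2 : ℝ)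
  (R : ι → Matrix m m ℂ)

/-- `tr(D_u Λ D_v)`, where `D_u` is the diagonal part of `R_u` and `Λ` the inverse of the diagonal
part of `Ψ⁻¹`. -/
def ewGain (u v : ι) : ℝ :=
  (diagonal (R u).diag * diagonal (pilotCov P p τ σ2 R).diag⁻¹ * diagonal (R v).diag).trace.re

/-- `Σ_v = p_v τ_p D_v Λ Ψ⁻¹ Λ D_v`. -/
def ewCov (v : ι) : Matrix m m ℂ :=
  ((p v * τ : ℝ) : ℂ) • (diagonal (R v).diag * diagonal (pilotCov P p τ σ2 R).diag⁻¹ *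
    pilotCov P p τ σ2 R * diagonal (pilotCov P p τ σ2 R).diag⁻¹ * diagonal (R v).diag)

variable {P p τ σ2 R}

lemma ewGain_le (hpτ : ∀ u, 0 ≤ p u * τ) (hσ2 : 0 < σ2) (hR : ∀ u, (R u).PosSemidef) (u v : ι) :
    ewGain P p τ σ2 R u v ≤ σ2⁻¹ * (diagonal (R u).diag * diagonal (R v).diag).trace.re := by
  rw [ewGain, (hR u).isHermitian.re_trace_diagonal_diag_mul_inv_mul_diagonal_diag (hR v).isHermitian
    (pilotCov_posSemidef hpτ hσ2.le hR).isHermitian,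
    (hR u).isHermitian.re_trace_diagonal_diag_mul_diagonal_diag (hR v).isHermitian]
  exact Finset.sum_div_le_inv_mul_sum
    (fun i _ => mul_nonneg ((hR u).re_apply_self_nonneg i) ((hR v).re_apply_self_nonneg i)) hσ2
    fun i _ => le_re_pilotCov_apply_self hpτ hR i

lemma inv_mul_le_ewGain (hpτ : ∀ u, 0 ≤ p u * τ) (hσ2 : 0 < σ2) (hR : ∀ u, (R u).PosSemidef)
    {C : ι → ℝ} (hRC : ∀ u, ((C u : ℂ) • 1 - R u).PosSemidef) (u v : ι) :
    (∑ w ∈ P, p w * τ * C w + σ2)⁻¹ * (diagonal (R u).diag * diagonal (R v).diag).trace.re ≤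
      ewGain P p τ σ2 R u v := by
  rw [ewGain, (hR u).isHermitian.re_trace_diagonal_diag_mul_inv_mul_diagonal_diag (hR v).isHermitian
    (pilotCov_posSemidef hpτ hσ2.le hR).isHermitian,
    (hR u).isHermitian.re_trace_diagonal_diag_mul_diagonal_diag (hR v).isHermitian]
  exact Finset.inv_mul_sum_le_sum_div
    (fun i _ => mul_nonneg ((hR u).re_apply_self_nonneg i) ((hR v).re_apply_self_nonneg i))
    (fun i _ => hσ2.trans_le (le_re_pilotCov_apply_self hpτ hR i))
    fun i _ => re_apply_self_le_of_posSemidef_sub (smul_one_sub_pilotCov_posSemidef hpτ hRC) i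

lemma ewGain_nonneg (hpτ : ∀ u, 0 ≤ p u * τ) (hσ2 : 0 < σ2) (hR : ∀ u, (R u).PosSemidef)
    (u v : ι) : 0 ≤ ewGain P p τ σ2 R u v := by
  rw [ewGain, (hR u).isHermitian.re_trace_diagonal_diag_mul_inv_mul_diagonal_diag (hR v).isHermitian
    (pilotCov_posSemidef hpτ hσ2.le hR).isHermitian]
  exact Finset.sum_nonneg fun i _ => div_nonneg
    (mul_nonneg ((hR u).re_apply_self_nonneg i) ((hR v).re_apply_self_nonneg i))
    (hσ2.le.trans (le_re_pilotCov_apply_self hpτ hR i))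

lemma re_trace_ewCov (v : ι) : (ewCov P p τ σ2 R v).trace.re = p v * τ * ewGain P p τ σ2 R v v := by
  rw [ewCov, trace_smul, trace_diagonal_diag_mul_inv_mul_mul_inv_mul_diagonal_diag, smul_eq_mul,
    Complex.re_ofReal_mul, ewGain]

lemma ewCov_posSemidef (hpτ : ∀ u, 0 ≤ p u * τ) (hσ2 : 0 ≤ σ2) (hR : ∀ u, (R u).PosSemidef)
    (v : ι) : (ewCov P p τ σ2 R v).PosSemidef :=
  ((pilotCov_posSemidef hpτ hσ2 hR).diagonal_diag_mul_inv_mul_mul_inv_mul_diagonal_diag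
    (hR v).isHermitian).smul (Complex.zero_le_real.2 (hpτ v))

lemma smul_one_sub_ewCov_posSemidef (hpτ : ∀ u, 0 ≤ p u * τ) (hσ2 : 0 < σ2)
    (hR : ∀ u, (R u).PosSemidef) {C : ι → ℝ} (hC0 : ∀ u, 0 ≤ C u)
    (hRC : ∀ u, ((C u : ℂ) • 1 - R u).PosSemidef) (v : ι) :
    (((p v * τ * ((∑ w ∈ P, p w * τ * C w + σ2) * (C v / σ2) ^ 2) : ℝ) : ℂ) • 1 -
      ewCov P p τ σ2 R v).PosSemidef := by
  refine (posSemidef_smul_one_sub_diagonal_diag_mul_inv_mul_mul_inv_mul_diagonal_diag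
    (hR v).isHermitian (pilotCov_posSemidef hpτ hσ2.le hR).isHermitian
    (le_add_of_nonneg_of_le (Finset.sum_nonneg fun u _ => mul_nonneg (hpτ u) (hC0 u)) hσ2.le)
    (smul_one_sub_pilotCov_posSemidef hpτ hRC) fun i => ?_).smul_one_sub_smul (hpτ v)
  have hψ := le_re_pilotCov_apply_self (P := P) (σ2 := σ2) hpτ hR i
  exact pow_le_pow_left₀ (div_nonneg ((hR v).re_apply_self_nonneg i) (hσ2.le.trans hψ))
    (div_le_div₀ (hC0 v) (re_apply_self_le_of_posSemidef_sub (hRC v) i) hσ2 hψ) 2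

end EWMMSE

section EWMMSEAsymptotics

variable {ι : Type*} {P : Finset ι} {p : ι → ℝ} {τ σ2 : ℝ}
  {R : ι → (M : ℕ) → Matrix (Fin M) (Fin M) ℂ}

lemma isBigO_ewGain (hpτ : ∀ u, 0 ≤ p u * τ) (hσ2 : 0 < σ2) (hR : ∀ u M, (R u M).PosSemidef)
    {C : ι → ℝ} (hRC : ∀ u M, ((C u : ℂ) • 1 - R u M).PosSemidef) (u v : ι) :
    (fun M => ewGain P p τ σ2 (R · M) u v) =O[atTop] fun M => (M : ℝ) := by
  refine IsBigO.of_nonneg_of_le (fun M => ewGain_nonneg hpτ hσ2 (hR · M) u v)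
    (fun M => (ewGain_le hpτ hσ2 (hR · M) u v).trans ?_)
    (((isBigO_refl _ _).const_mul_left (C u * C v)).const_mul_left σ2⁻¹)
  have h := (hR u M).re_trace_diagonal_diag_mul_diagonal_diag_le (hR v M) (hRC u M) (hRC v M)
  rw [Fintype.card_fin] at h
  exact mul_le_mul_of_nonneg_left h (inv_nonneg.2 hσ2.le)

lemma isLittleO_ewGain (hpτ : ∀ u, 0 ≤ p u * τ) (hσ2 : 0 < σ2) (hR : ∀ u M, (R u M).PosSemidef)
    {u v : ι}
    (h : Tendsto (fun M : ℕ => (diagonal (R u M).diag * diagonal (R v M).diag).trace.re / M)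
      atTop (𝓝 0)) :
    (fun M => ewGain P p τ σ2 (R · M) u v) =o[atTop] fun M => (M : ℝ) :=
  (IsBigO.of_nonneg_of_le (fun M => ewGain_nonneg hpτ hσ2 (hR · M) u v)
    (fun M => ewGain_le hpτ hσ2 (hR · M) u v) (isBigO_refl _ _)).trans_isLittleO
    ((isLittleO_natCast_of_tendsto_div h).const_mul_left σ2⁻¹)

lemma exists_pos_eventually_le_sum_ewGain (hpτ : ∀ u, 0 ≤ p u * τ) (hσ2 : 0 < σ2)
    (hR : ∀ u M, (R u M).PosSemidef) {C : ι → ℝ} (hC0 : ∀ u, 0 ≤ C u)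
    (hRC : ∀ u M, ((C u : ℂ) • 1 - R u M).PosSemidef) {s : Finset ι} {v : ι}
    (h : ∃ c > 0, ∃ M₀ : ℕ, ∀ M ≥ M₀,
      c ≤ ∑ u ∈ s, (diagonal (R u M).diag * diagonal (R v M).diag).trace.re / M) :
    ∃ c > 0, ∀ᶠ M : ℕ in atTop, c * M ≤ ∑ u ∈ s, ewGain P p τ σ2 (R · M) u v := by
  obtain ⟨c, hc, M₀, hcM⟩ := h
  set B := ∑ w ∈ P, p w * τ * C w + σ2
  have hB : 0 < B := add_pos_of_nonneg_of_pos
    (Finset.sum_nonneg fun u _ => mul_nonneg (hpτ u) (hC0 u)) hσ2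
  refine ⟨B⁻¹ * c, mul_pos (inv_pos.2 hB) hc, ?_⟩
  filter_upwards [eventually_ge_atTop M₀, eventually_gt_atTop 0] with M hM hM0
  have hce : c * M ≤ ∑ u ∈ s, (diagonal (R u M).diag * diagonal (R v M).diag).trace.re := by
    rw [← le_div_iff₀ (Nat.cast_pos.2 hM0), Finset.sum_div]
    exact hcM M hM
  calc B⁻¹ * c * M = B⁻¹ * (c * M) := mul_assoc _ _ _
    _ ≤ B⁻¹ * ∑ u ∈ s, (diagonal (R u M).diag * diagonal (R v M).diag).trace.re :=
      mul_le_mul_of_nonneg_left hce (inv_nonneg.2 hB.le)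
    _ ≤ _ := by
      rw [Finset.mul_sum]
      exact Finset.sum_le_sum fun u _ => inv_mul_le_ewGain hpτ hσ2 (hR · M) (hRC · M) u v

lemma exists_pos_eventually_le_ewGain_self (hpτ : ∀ u, 0 ≤ p u * τ) (hσ2 : 0 < σ2)
    (hR : ∀ u M, (R u M).PosSemidef) {C : ι → ℝ} (hC0 : ∀ u, 0 ≤ C u)
    (hRC : ∀ u M, ((C u : ℂ) • 1 - R u M).PosSemidef) {v : ι}
    (h : 0 < liminf (fun M : ℕ => (R v M).trace.re / M) atTop) :
    ∃ δ > 0, ∀ᶠ M : ℕ in atTop, δ * M ≤ ewGain P p τ σ2 (R · M) v v := by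
  obtain ⟨δ, hδ, hδM⟩ := exists_pos_eventually_mul_le_of_liminf_pos
    (fun M => (Complex.nonneg_iff.1 (hR v M).trace_nonneg).1) h
  set B := ∑ w ∈ P, p w * τ * C w + σ2
  have hB : 0 < B := add_pos_of_nonneg_of_pos
    (Finset.sum_nonneg fun u _ => mul_nonneg (hpτ u) (hC0 u)) hσ2
  refine ⟨B⁻¹ * δ ^ 2, by positivity, ?_⟩
  filter_upwards [hδM, eventually_gt_atTop 0] with M hM hM0
  have hM' : (0 : ℝ) < M := Nat.cast_pos.2 hM0
  have hCS := (hR v M).isHermitian.sq_re_trace_le_card_mul_re_trace_diagonal_diag_mul_diagonal_diag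
  rw [Fintype.card_fin] at hCS
  have hsq : δ ^ 2 * M ≤ (diagonal (R v M).diag * diagonal (R v M).diag).trace.re := by
    refine le_of_mul_le_mul_left ?_ hM'
    calc (M : ℝ) * (δ ^ 2 * M) = (δ * M) ^ 2 := by ring
      _ ≤ (R v M).trace.re ^ 2 := pow_le_pow_left₀ (by positivity) hM 2
      _ ≤ _ := hCS
  calc B⁻¹ * δ ^ 2 * M = B⁻¹ * (δ ^ 2 * M) := mul_assoc _ _ _
    _ ≤ B⁻¹ * (diagonal (R v M).diag * diagonal (R v M).diag).trace.re :=
      mul_le_mul_of_nonneg_left hsq (inv_nonneg.2 hB.le)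
    _ ≤ _ := inv_mul_le_ewGain hpτ hσ2 (hR · M) (hRC · M) v v

end EWMMSEAsymptotics

/-- **Theorem 7, UL asymptotics with EW-MMSE estimation.** -/
theorem stmt13 (L K : ℕ) (jk : Fin L × Fin K)
    (P : Finset (Fin L × Fin K)) (hjkP : jk ∈ P)
    (p : Fin L × Fin K → ℝ) (hp : ∀ u, 0 < p u)
    (τ σ2 : ℝ) (hτ : 0 < τ) (hσ2 : 0 < σ2)
    (R : (Fin L × Fin K) → (M : ℕ) → Matrix (Fin M) (Fin M) ℂ)
    (hbar : (Fin L × Fin K) → (M : ℕ) → (Fin M → ℂ))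
    (hRpsd : ∀ u M, (R u M).PosSemidef)
    (hA1a : ∀ u, ∃ C : ℝ, ∀ M,
      (((C : ℂ) • (1 : Matrix (Fin M) (Fin M) ℂ)) - R u M).PosSemidef)
    (hA1b : ∀ u, 0 < Filter.liminf (fun M : ℕ => ((R u M).trace).re / M) Filter.atTop)
    (hA2 : ∀ u, ∃ C : ℝ, ∀ M : ℕ, (star (hbar u M) ⬝ᵥ hbar u M).re / M ≤ C)
    (hA3 : ∀ u v, u ≠ v →
      Tendsto (fun M : ℕ => ‖star (hbar u M) ⬝ᵥ hbar v M‖ / M) atTop (nhds 0)) :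
    -- `Ψ⁻¹(M) = Σ_{u∈P} p_u τ_p R_u(M) + σ² I`
    let Ψinv : (M : ℕ) → Matrix (Fin M) (Fin M) ℂ :=
      fun M => (∑ u ∈ P, ((p u * τ : ℝ) : ℂ) • R u M) + ((σ2 : ℝ) : ℂ) • 1
    -- `D_u(M)`: diagonal part of `R_u(M)`
    let D : (Fin L × Fin K) → (M : ℕ) → Matrix (Fin M) (Fin M) ℂ :=
      fun u M => Matrix.diagonal fun m => R u M m m
    -- `Λ(M)`: reciprocals of the diagonal of `Ψ⁻¹(M)`
    let Λ : (M : ℕ) → Matrix (Fin M) (Fin M) ℂ :=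
      fun M => Matrix.diagonal fun m => (Ψinv M m m)⁻¹
    -- `Σ_{jk}(M) = p_{jk} τ_p D_{jk} Λ Ψ⁻¹ Λ D_{jk}`
    let Sjk : (M : ℕ) → Matrix (Fin M) (Fin M) ℂ :=
      fun M => ((p jk * τ : ℝ) : ℂ) • (D jk M * Λ M * Ψinv M * Λ M * D jk M)
    -- interference term `χ_{li}`
    let χ : (Fin L × Fin K) → ℕ → ℝ := fun u M =>
      ((R u M * Sjk M).trace).re
        + (star (hbar jk M) ⬝ᵥ (R u M *ᵥ hbar jk M)).re
        + (star (hbar u M) ⬝ᵥ (Sjk M *ᵥ hbar u M)).re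
        + Complex.normSq (star (hbar jk M) ⬝ᵥ hbar u M)
        + (if u ∈ P then
            p jk * p u * τ ^ 2 * (((D u M * Λ M * D jk M).trace).re) ^ 2
              + 2 * Real.sqrt (p jk * p u) * τ * (((D u M * Λ M * D jk M).trace).re)
                * (star (hbar jk M) ⬝ᵥ hbar u M).re
          else 0)
    -- the closed-form UL SINR `γ^{ew}(M)`
    let γ : ℕ → ℝ := fun M =>
      p jk * (p jk * τ * (((D jk M * Λ M * D jk M).trace).re)
          + (star (hbar jk M) ⬝ᵥ hbar jk M).re) ^ 2
        / ((∑ u : Fin L × Fin K, p u * χ u M)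
            - p jk * (p jk * τ * (((D jk M * Λ M * D jk M).trace).re)
                + (star (hbar jk M) ⬝ᵥ hbar jk M).re) ^ 2
            + σ2 * (((Sjk M).trace).re + (star (hbar jk M) ⬝ᵥ hbar jk M).re))
    -- (a)
    ((∀ u ∈ P.erase jk,
        Tendsto (fun M : ℕ => ((D u M * D jk M).trace).re / M) atTop (nhds 0)) →
      Tendsto γ atTop atTop)
    -- (b)
    ∧ ((∃ c > 0, ∃ M₀ : ℕ, ∀ M ≥ M₀,
          c ≤ ∑ u ∈ P.erase jk, ((D u M * D jk M).trace).re / M) →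
      Tendsto (fun M : ℕ => γ M -
          (p jk ^ 2 * τ * (((D jk M * Λ M * D jk M).trace).re)
            + p jk * (star (hbar jk M) ⬝ᵥ hbar jk M).re)
          / (∑ u ∈ P.erase jk,
              p u ^ 2 * p jk * τ ^ 2 * (((D u M * Λ M * D jk M).trace).re) ^ 2
                / (p jk * τ * (((D jk M * Λ M * D jk M).trace).re)
                    + (star (hbar jk M) ⬝ᵥ hbar jk M).re)))
        atTop (nhds 0)) := by
  intro Ψinv D Λ Sjk χ γ
  have hpτ u : 0 ≤ p u * τ := mul_nonneg (hp u).le hτ.le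
  obtain ⟨C, hC0, hRC⟩ := exists_nonneg_forall_posSemidef_smul_one_sub hA1a
  choose Cn hCn using hA2
  have hn0 u M : 0 ≤ (star (hbar u M) ⬝ᵥ hbar u M).re :=
    (Complex.nonneg_iff.1 (dotProduct_star_self_nonneg (hbar u M))).1
  have hn u := isBigO_natCast_of_div_le (hn0 u) (hCn u)
  have hz u (hu : u ≠ jk) := isLittleO_natCast_of_tendsto_div (hA3 jk u hu.symm)
  have hb u := isBigO_ewGain (P := P) hpτ hσ2 hRpsd hRC u jk
  have hS M := ewCov_posSemidef (P := P) (σ2 := σ2) hpτ hσ2.le (hRpsd · M) jk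
  have hSκ M := smul_one_sub_ewCov_posSemidef (P := P) hpτ hσ2 (hRpsd · M) hC0 (hRC · M) jk
  have hS_tr M := re_trace_ewCov (P := P) (p := p) (τ := τ) (σ2 := σ2) (R := (R · M)) jk
  have key := tendsto_sinr σ2 hjkP hp hτ hσ2
    hS_tr (exists_pos_eventually_le_ewGain_self (P := P) hpτ hσ2 hRpsd hC0 hRC (hA1b jk))
    (hn0 jk) (hn jk)
    (fun u M => (hRpsd u M).re_trace_mul_add_re_dotProduct_mulVec_add_nonneg (hS M) _ _)
    (fun u => isBigO_re_trace_mul_add_re_dotProduct_mulVec_add (hRpsd u) (hRC u) hS hSκ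
      (((hb jk).const_mul_left (p jk * τ)).congr_left fun M => (hS_tr M).symm) (hn jk) (hn u))
    (fun u M => (sq _).trans_le (Complex.re_sq_le_normSq _))
    (fun M => Complex.normSq_star_dotProduct_self _) (fun _ => rfl)
    (fun u hu => ((hz u hu).pow two_pos).congr_left fun M => (Complex.normSq_eq_norm_sq _).symm)
    (fun u hu => (isBigO_of_le _ fun M => by simpa using Complex.abs_re_le_norm _).trans_isLittleO
      (hz u hu))
    hb (fun _ => rfl)
  exact key.imp (fun h hyp => h fun u hu => isLittleO_ewGain (P := P) hpτ hσ2 hRpsd (hyp u hu))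
    (fun h hyp => h (exists_pos_eventually_le_sum_ewGain (P := P) hpτ hσ2 hRpsd hC0 hRC hyp))
end

section
/- In the asymptotic uplink setup, define the deterministic UL SINR with the mean-only (MO) estimator: γ^mo(M) = p_{jk}‖h̄_{jk}‖² / [Σ_{all users (l,i)} (p_{li}/‖h̄_{jk}‖²)(h̄_{jk}^H R_{li} h̄_{jk} + |h̄_{jk}^H h̄_{li}|²) − p_{jk}‖h̄_{jk}‖² + σ²]. If in addition liminf_{M→∞} ‖h̄_{jk}(M)‖²/M > 0 (user (j,k) has a line-of-sight path), then γ^mo(M) → +∞ as M → ∞. -/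
/-!
Write `h̄ = h̄_{jk}`. The own-user term `|h̄^H h̄|² = ‖h̄‖⁴` cancels the subtracted signal power, so
`p_{jk} / γ^mo = σ²/‖h̄‖² + Σ_u p_u h̄^H R_u h̄/‖h̄‖⁴ + Σ_{u ≠ (j,k)} p_u |h̄^H h̄_u|²/‖h̄‖⁴ > 0`.
Line of sight gives `‖h̄‖² ≥ cM` eventually, so `‖h̄‖² → ∞` and every term tends to `0`:
`h̄^H R_u h̄ ≤ ‖R_u‖ ‖h̄‖²`, and `|h̄^H h̄_u| / ‖h̄‖² ≤ |h̄^H h̄_u| / (cM) → 0` by asymptotic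
orthogonality of the means.
-/

open Matrix Filter Topology Finset
open scoped ComplexOrder

namespace Matrix

variable {n : Type*} [Fintype n]

lemma re_star_dotProduct_self_nonneg (v : n → ℂ) : 0 ≤ (star v ⬝ᵥ v).re :=
  (Complex.nonneg_iff.mp (dotProduct_star_self_nonneg v)).1

lemma ofReal_re_star_dotProduct_self (v : n → ℂ) : ((star v ⬝ᵥ v).re : ℂ) = star v ⬝ᵥ v :=
  Complex.ext rfl (by simp [← (Complex.nonneg_iff.mp (dotProduct_star_self_nonneg v)).2])

lemma normSq_star_dotProduct_self (v : n → ℂ) :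
    Complex.normSq (star v ⬝ᵥ v) = (star v ⬝ᵥ v).re ^ 2 := by
  conv_lhs => rw [← ofReal_re_star_dotProduct_self]
  rw [Complex.normSq_ofReal, sq]

lemma PosSemidef.re_star_dotProduct_mulVec_nonneg {A : Matrix n n ℂ} (hA : A.PosSemidef)
    (v : n → ℂ) : 0 ≤ (star v ⬝ᵥ (A *ᵥ v)).re :=
  (Complex.nonneg_iff.mp (hA.dotProduct_mulVec_nonneg v)).1

lemma re_star_dotProduct_mulVec_le_of_posSemidef_sub [DecidableEq n] {A : Matrix n n ℂ} {C : ℝ}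
    (h : ((C : ℂ) • (1 : Matrix n n ℂ) - A).PosSemidef) (v : n → ℂ) :
    (star v ⬝ᵥ (A *ᵥ v)).re ≤ C * (star v ⬝ᵥ v).re := by
  have := h.re_star_dotProduct_mulVec_nonneg v
  simp only [sub_mulVec, smul_mulVec, one_mulVec, dotProduct_sub, dotProduct_smul,
    Complex.sub_re, smul_eq_mul, Complex.re_ofReal_mul] at this
  linarith

end Matrix

lemma exists_pos_mul_le_of_liminf_div_pos {f : ℕ → ℝ} (hf0 : ∀ M, 0 ≤ f M)
    (hf : 0 < liminf (fun M : ℕ => f M / M) atTop) :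
    ∃ c > 0, ∀ᶠ M : ℕ in atTop, c * M ≤ f M := by
  obtain ⟨c, hc, hcf⟩ := exists_between hf
  have hbdd : IsBoundedUnder (· ≥ ·) atTop (fun M : ℕ => f M / M) :=
    isBoundedUnder_of ⟨0, fun M => div_nonneg (hf0 M) M.cast_nonneg⟩
  refine ⟨c, hc, ?_⟩
  filter_upwards [eventually_lt_of_lt_liminf hcf hbdd, eventually_gt_atTop 0] with M hM hM0
  exact ((lt_div_iff₀ (by positivity)).mp hM).le

lemma tendsto_div_nhds_zero_of_mul_le {f g : ℕ → ℝ} {c : ℝ} (hc : 0 < c) (hf0 : ∀ M, 0 ≤ f M)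
    (hf : Tendsto (fun M : ℕ => f M / M) atTop (𝓝 0)) (hg : ∀ᶠ M : ℕ in atTop, c * M ≤ g M) :
    Tendsto (fun M => f M / g M) atTop (𝓝 0) := by
  have hlim : Tendsto (fun M : ℕ => f M / M / c) atTop (𝓝 0) := by
    simpa using hf.div_const c
  refine squeeze_zero' ?_ ?_ hlim
  · filter_upwards [hg] with M hM
    exact div_nonneg (hf0 M) (le_trans (by positivity) hM)
  · filter_upwards [hg, eventually_gt_atTop 0] with M hM hM0
    rw [div_div, mul_comm (M : ℝ)]
    exact div_le_div_of_nonneg_left (hf0 M) (by positivity) hM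

section SignalToInterference

variable {α ι : Type*} {l : Filter α}

lemma tendsto_div_sq_nhds_zero_of_le_mul {a n : α → ℝ} {C : ℝ} (hn : Tendsto n l atTop)
    (ha0 : ∀ x, 0 ≤ a x) (ha : ∀ x, a x ≤ C * n x) :
    Tendsto (fun x => a x / n x ^ 2) l (𝓝 0) := by
  refine squeeze_zero' (.of_forall fun x => div_nonneg (ha0 x) (sq_nonneg _)) ?_
    ((tendsto_const_nhds (x := C)).div_atTop hn)
  filter_upwards [hn.eventually_gt_atTop 0] with x hx
  rw [div_le_div_iff₀ (by positivity) hx]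
  nlinarith [ha x]

variable [Fintype ι] [DecidableEq ι]

lemma sum_div_mul_add_sub_add_eq_mul (i₀ : ι) (p a b : ι → ℝ) {n σ2 : ℝ} (hn : n ≠ 0)
    (hb : b i₀ = n ^ 2) :
    (∑ u, p u / n * (a u + b u)) - p i₀ * n + σ2
      = n * (σ2 / n + ∑ u, p u * (a u / n ^ 2) + ∑ u ∈ univ.erase i₀, p u * (b u / n ^ 2)) := by
  have hsplit : ∑ u, p u / n * (a u + b u)
      = ∑ u, p u / n * a u + (∑ u ∈ univ.erase i₀, p u / n * b u + p i₀ / n * b i₀) := by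
    rw [sum_erase_add _ _ (mem_univ i₀), ← sum_add_distrib]
    simp_rw [mul_add]
  rw [hsplit, hb, mul_add, mul_add, mul_sum, mul_sum]
  field_simp
  ring

theorem tendsto_atTop_signal_div_interference (i₀ : ι) {p : ι → ℝ} (hp : ∀ u, 0 ≤ p u)
    (hp₀ : 0 < p i₀) {σ2 : ℝ} (hσ2 : 0 < σ2) {n : α → ℝ} {a b : ι → α → ℝ}
    (hn : Tendsto n l atTop)
    (ha0 : ∀ u x, 0 ≤ a u x) (ha : ∀ u, Tendsto (fun x => a u x / n x ^ 2) l (𝓝 0))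
    (hb0 : ∀ u x, 0 ≤ b u x) (hb : ∀ u ≠ i₀, Tendsto (fun x => b u x / n x ^ 2) l (𝓝 0))
    (hbi₀ : ∀ x, b i₀ x = n x ^ 2) :
    Tendsto (fun x => p i₀ * n x / ((∑ u, p u / n x * (a u x + b u x)) - p i₀ * n x + σ2))
      l atTop := by
  set J := fun x => σ2 / n x + ∑ u, p u * (a u x / n x ^ 2)
    + ∑ u ∈ univ.erase i₀, p u * (b u x / n x ^ 2) with hJ
  have hnpos : ∀ᶠ x in l, 0 < n x := hn.eventually_gt_atTop 0
  have hJ0 : Tendsto J l (𝓝 0) := by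
    simpa using ((tendsto_const_nhds.div_atTop hn).add
      (tendsto_finsetSum _ fun u _ => (ha u).const_mul (p u))).add
      (tendsto_finsetSum _ fun u hu => (hb u (ne_of_mem_erase hu)).const_mul (p u))
  have hJpos : ∀ᶠ x in l, 0 < J x := by
    filter_upwards [hnpos] with x hx
    refine add_pos_of_pos_of_nonneg (add_pos_of_pos_of_nonneg (by positivity) ?_) ?_ <;>
      refine sum_nonneg fun u _ => mul_nonneg (hp u) (div_nonneg ?_ (sq_nonneg _))
    exacts [ha0 u x, hb0 u x]
  refine ((tendsto_nhdsWithin_iff.mpr ⟨hJ0, hJpos⟩).inv_tendsto_nhdsGT_zero.const_mul_atTop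
    hp₀).congr' ?_
  filter_upwards [hnpos] with x hx
  rw [hJ, Pi.inv_apply, sum_div_mul_add_sub_add_eq_mul i₀ p _ _ hx.ne' (hbi₀ x), mul_comm (n x),
    mul_div_mul_right _ _ hx.ne']
  exact (div_eq_mul_inv _ _).symm

end SignalToInterference

theorem stmt17_general (L K : ℕ) (jk : Fin L × Fin K)
    (p : Fin L × Fin K → ℝ) (hp : ∀ u, 0 < p u)
    (σ2 : ℝ) (hσ2 : 0 < σ2)
    (R : (Fin L × Fin K) → (M : ℕ) → Matrix (Fin M) (Fin M) ℂ)
    (hbar : (Fin L × Fin K) → (M : ℕ) → (Fin M → ℂ))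
    (hRpsd : ∀ u M, (R u M).PosSemidef)
    (hA1a : ∀ u, ∃ C : ℝ, ∀ M,
      (((C : ℂ) • (1 : Matrix (Fin M) (Fin M) ℂ)) - R u M).PosSemidef)
    (hA3 : ∀ u v, u ≠ v →
      Tendsto (fun M : ℕ => ‖star (hbar u M) ⬝ᵥ hbar v M‖ / M) atTop (nhds 0))
    -- user `(j,k)` has a line-of-sight path
    (hLoS : 0 < Filter.liminf
      (fun M : ℕ => (star (hbar jk M) ⬝ᵥ hbar jk M).re / M) Filter.atTop) :
    -- the deterministic UL SINR with the mean-only estimator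
    let γ : ℕ → ℝ := fun M =>
      p jk * (star (hbar jk M) ⬝ᵥ hbar jk M).re
        / ((∑ u : Fin L × Fin K,
              p u / (star (hbar jk M) ⬝ᵥ hbar jk M).re
                * ((star (hbar jk M) ⬝ᵥ (R u M *ᵥ hbar jk M)).re
                  + Complex.normSq (star (hbar jk M) ⬝ᵥ hbar u M)))
            - p jk * (star (hbar jk M) ⬝ᵥ hbar jk M).re + σ2)
    Tendsto γ atTop atTop := by
  intro γ
  obtain ⟨c, hc, hcn⟩ :=
    exists_pos_mul_le_of_liminf_div_pos (fun M => re_star_dotProduct_self_nonneg _) hLoS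
  have hn : Tendsto (fun M => (star (hbar jk M) ⬝ᵥ hbar jk M).re) atTop atTop :=
    tendsto_atTop_mono' _ hcn (tendsto_natCast_atTop_atTop.const_mul_atTop hc)
  refine tendsto_atTop_signal_div_interference jk (fun u => (hp u).le) (hp jk) hσ2 hn
    (fun u M => (hRpsd u M).re_star_dotProduct_mulVec_nonneg _) (fun u => ?_)
    (fun u M => Complex.normSq_nonneg _) (fun u hu => ?_)
    (fun M => normSq_star_dotProduct_self _)
  · obtain ⟨C, hC⟩ := hA1a u
    exact tendsto_div_sq_nhds_zero_of_le_mul hn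
      (fun M => (hRpsd u M).re_star_dotProduct_mulVec_nonneg _)
      (fun M => re_star_dotProduct_mulVec_le_of_posSemidef_sub (hC M) _)
  · simpa [Complex.normSq_eq_norm_sq, div_pow] using
      (tendsto_div_nhds_zero_of_mul_le hc (fun M => norm_nonneg _) (hA3 jk u hu.symm) hcn).pow 2

/-- **UL asymptotics with the mean-only estimator.** -/
theorem stmt17 (L K : ℕ) (jk : Fin L × Fin K)
    (P : Finset (Fin L × Fin K)) (hjkP : jk ∈ P)
    (p : Fin L × Fin K → ℝ) (hp : ∀ u, 0 < p u)
    (τ σ2 : ℝ) (hτ : 0 < τ) (hσ2 : 0 < σ2)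
    (R : (Fin L × Fin K) → (M : ℕ) → Matrix (Fin M) (Fin M) ℂ)
    (hbar : (Fin L × Fin K) → (M : ℕ) → (Fin M → ℂ))
    (hRpsd : ∀ u M, (R u M).PosSemidef)
    (hA1a : ∀ u, ∃ C : ℝ, ∀ M,
      (((C : ℂ) • (1 : Matrix (Fin M) (Fin M) ℂ)) - R u M).PosSemidef)
    (hA1b : ∀ u, 0 < Filter.liminf (fun M : ℕ => ((R u M).trace).re / M) Filter.atTop)
    (hA2 : ∀ u, ∃ C : ℝ, ∀ M : ℕ, (star (hbar u M) ⬝ᵥ hbar u M).re / M ≤ C)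
    (hA3 : ∀ u v, u ≠ v →
      Tendsto (fun M : ℕ => ‖star (hbar u M) ⬝ᵥ hbar v M‖ / M) atTop (nhds 0))
    -- user `(j,k)` has a line-of-sight path
    (hLoS : 0 < Filter.liminf
      (fun M : ℕ => (star (hbar jk M) ⬝ᵥ hbar jk M).re / M) Filter.atTop) :
    -- the deterministic UL SINR with the mean-only estimator
    let γ : ℕ → ℝ := fun M =>
      p jk * (star (hbar jk M) ⬝ᵥ hbar jk M).re
        / ((∑ u : Fin L × Fin K,
              p u / (star (hbar jk M) ⬝ᵥ hbar jk M).re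
                * ((star (hbar jk M) ⬝ᵥ (R u M *ᵥ hbar jk M)).re
                  + Complex.normSq (star (hbar jk M) ⬝ᵥ hbar u M)))
            - p jk * (star (hbar jk M) ⬝ᵥ hbar jk M).re + σ2)
    Tendsto γ atTop atTop :=
  stmt17_general L K jk p hp σ2 hσ2 R hbar hRpsd hA1a hA3 hLoS
end
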